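/- arXiv:math/0406124 — 2 statements merged into one kernel-verified Lean document; each statement's English description precedes it below -/
import Mathlib

section
/- Let ε = ε(n) with 0 ≤ ε < 1/2 and ω(n) → ∞, and set t = ω(n)·n^{1−ε} with t = o(n) and m = ⌈(1−2ε)·log₂ n⌉. Then the probability that a uniformly random configuration of t pebbles on F_{m,n} is solvable tends to 1 as n → ∞. -/
/-- A single pebbling step on a graph `G`: remove two pebbles from a vertex `u`
and place one pebble on a neighbor `v` of `u`. -/
def PebStep {V : Type*} [DecidableEq V] (G : SimpleGraph V) (C C' : V → ℕ) : Prop :=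
  ∃ u v : V, G.Adj u v ∧ 2 ≤ C u ∧
    C' = fun w => if w = u then C u - 2 else if w = v then C w + 1 else C w

/-- The fuse graph `F_{m,n}` on vertices `v_1, …, v_n` (0-indexed as `Fin n`):
a path `v_1 — v_2 — ⋯ — v_m` together with pendant vertices `v_{m+1}, …, v_n`
each adjacent to `v_m`. -/
def fuse (n m : ℕ) : SimpleGraph (Fin n) :=
  SimpleGraph.fromRel (fun i j =>
    (i.val + 1 = j.val ∧ j.val ≤ m - 1) ∨ (m ≤ j.val ∧ i.val = m - 1))

open Filter

/-!
Call a leaf `v_j` (`j > m`) heavy when it carries at least two pebbles. If at least `2 ^ m`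
leaves are heavy, each of them sends one pebble to the centre `v_m`, and `2 ^ m` pebbles on
`v_m` reach any vertex, since every vertex is within distance `m` of `v_m`.

The number `K` of heavy leaves is concentrated: the `t`-multisets containing a fixed multiset of
size `k` are counted by `multichoose n (t - k)`, which gives `E K` and `E K²`, and the
second-moment bound `P(K < E K / 2) ≤ 4 (E K² / (E K)² - 1)` is `O(n / t² + 1 / n)`,
i.e. `O(1 / ω² + 1 / n)`. Finally `E K / 2 ≥ t² / (32 n) = ω² n^(1-2ε) / 32 ≥ 2 ^ m`
once `ω ≥ 8`.
-/

open Finset Relation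

def Solvable {V : Type*} [DecidableEq V] (G : SimpleGraph V) (C : V → ℕ) : Prop :=
  ∀ r, ∃ C', ReflTransGen (PebStep G) C C' ∧ 1 ≤ C' r

def heavyCount {α : Type*} (P : Finset α) (C : α → ℕ) : ℕ := #{v ∈ P | 2 ≤ C v}

section Pebbling

variable {V : Type*} [DecidableEq V] {G : SimpleGraph V}

theorem pebStep_of_adj {u v : V} (h : G.Adj u v) {C : V → ℕ} (hC : 2 ≤ C u) :
    PebStep G C (Function.update (Function.update C u (C u - 2)) v (C v + 1)) := by
  refine ⟨u, v, h, hC, funext fun w => ?_⟩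
  by_cases hwv : w = v
  · subst hwv; simp [h.ne']
  · by_cases hwu : w = u
    · subst hwu; simp [h.ne]
    · simp [hwu, hwv]

theorem exists_reflTransGen_pebStep_move {u v : V} (h : G.Adj u v) (k : ℕ) {C : V → ℕ}
    (hC : 2 * k ≤ C u) :
    ∃ C', ReflTransGen (PebStep G) C C' ∧ C' v = C v + k ∧
      ∀ w, w ≠ u → w ≠ v → C' w = C w := by
  induction k generalizing C with
  | zero => exact ⟨C, .refl, rfl, fun _ _ _ => rfl⟩
  | succ k ih =>
    obtain ⟨C', hCC', hv, hw⟩ :=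
      ih (C := Function.update (Function.update C u (C u - 2)) v (C v + 1)) (by
        simp only [h.ne, ne_eq, not_false_eq_true, Function.update_of_ne, Function.update_self]
        omega)
    refine ⟨C', .head (pebStep_of_adj h (by omega)) hCC', ?_, fun w hwu hwv => ?_⟩
    · simp only [hv, Function.update_self]
      omega
    · simp [hw w hwu hwv, hwu, hwv]

theorem exists_reflTransGen_pebStep_gather {c : V} (S : Finset V) (hS : ∀ v ∈ S, G.Adj v c)
    (hc : c ∉ S) {C : V → ℕ} (hC : ∀ v ∈ S, 2 ≤ C v) :
    ∃ C', ReflTransGen (PebStep G) C C' ∧ C c + #S ≤ C' c := by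
  induction S using Finset.induction generalizing C with
  | empty => exact ⟨C, .refl, by simp⟩
  | @insert a S ha ih =>
    obtain ⟨C₁, hCC₁, hc₁, hC₁⟩ :=
      exists_reflTransGen_pebStep_move (hS a (mem_insert_self a S)) 1 (hC a (mem_insert_self a S))
    obtain ⟨C', hC₁C', hc'⟩ := ih (fun v hv => hS v (mem_insert_of_mem hv))
      (fun h => hc (mem_insert_of_mem h)) (C := C₁) fun v hv => by
        rw [hC₁ v (fun h => ha (h ▸ hv)) (fun h => hc (h ▸ mem_insert_of_mem hv))]
        exact hC v (mem_insert_of_mem hv)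
    exact ⟨C', hCC₁.trans hC₁C', by rw [card_insert_of_notMem ha]; omega⟩

theorem exists_reflTransGen_pebStep_of_walk {u r : V} (p : G.Walk u r) {C : V → ℕ}
    (hC : 2 ^ p.length ≤ C u) : ∃ C', ReflTransGen (PebStep G) C C' ∧ 1 ≤ C' r := by
  induction p generalizing C with
  | nil => exact ⟨C, .refl, by simpa using hC⟩
  | cons h p ih =>
    obtain ⟨C₁, hCC₁, hv, -⟩ := exists_reflTransGen_pebStep_move h (2 ^ p.length) (C := C)
      (by rw [SimpleGraph.Walk.length_cons, pow_succ] at hC; omega)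
    obtain ⟨C', hC₁C', hr⟩ := ih (C := C₁) (by omega)
    exact ⟨C', hCC₁.trans hC₁C', hr⟩

end Pebbling

section Fuse

variable {n m : ℕ}

theorem fuse_adj_succ {i : ℕ} (hi : i + 1 < m) (hmn : m ≤ n) :
    (fuse n m).Adj ⟨i + 1, by omega⟩ ⟨i, by omega⟩ := by
  simp only [fuse, SimpleGraph.fromRel_adj, ne_eq, Fin.mk.injEq, true_and]
  omega

theorem fuse_adj_center (hm : 1 ≤ m) (hmn : m ≤ n) {v : Fin n} (hv : m ≤ v.val) :
    (fuse n m).Adj ⟨m - 1, by omega⟩ v := by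
  simp only [fuse, SimpleGraph.fromRel_adj, ne_eq, Fin.ext_iff, and_true]
  omega

theorem fuse_exists_walk_path {i d : ℕ} (h : i + d < m) (hmn : m ≤ n) :
    ∃ p : (fuse n m).Walk ⟨i + d, by omega⟩ ⟨i, by omega⟩, p.length = d := by
  induction d with
  | zero => exact ⟨.nil, rfl⟩
  | succ d ih =>
    obtain ⟨p, hp⟩ := ih (by omega)
    exact ⟨.cons (fuse_adj_succ (i := i + d) (by omega) hmn) p, by simp [hp]⟩

theorem fuse_exists_walk_from_center (hm : 1 ≤ m) (hmn : m ≤ n) (r : Fin n) :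
    ∃ p : (fuse n m).Walk ⟨m - 1, by omega⟩ r, p.length ≤ m := by
  by_cases hr : m ≤ r.val
  · exact ⟨(fuse_adj_center hm hmn hr).toWalk, by simpa using hm⟩
  · obtain ⟨p, hp⟩ := fuse_exists_walk_path (i := r.val) (d := m - 1 - r.val) (by omega) hmn
    have hc : r.val + (m - 1 - r.val) = m - 1 := by omega
    exact ⟨p.copy (by simp [hc]) rfl, by simp only [SimpleGraph.Walk.length_copy, hp]; omega⟩

def fuseLeaves (n m : ℕ) : Finset (Fin n) := {v | m ≤ v.val}

theorem card_fuseLeaves : #(fuseLeaves n m) = n - m := by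
  have h := card_filter_add_card_filter_not (s := univ) (p := fun v : Fin n => (v : ℕ) < m)
  simp only [Fin.card_filter_val_lt, not_lt, card_univ, Fintype.card_fin] at h
  rw [fuseLeaves]
  omega

theorem fuse_solvable_of_two_pow_le_heavyCount (hm : 1 ≤ m) (hmn : m ≤ n) {C : Fin n → ℕ}
    (hC : 2 ^ m ≤ heavyCount (fuseLeaves n m) C) : Solvable (fuse n m) C := by
  intro r
  set c : Fin n := ⟨m - 1, by omega⟩
  obtain ⟨C₁, hCC₁, hc₁⟩ := exists_reflTransGen_pebStep_gather (c := c)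
    {v ∈ fuseLeaves n m | 2 ≤ C v}
    (fun v hv => (fuse_adj_center hm hmn (by simpa [fuseLeaves] using (mem_filter.1 hv).1)).symm)
    (by simp only [fuseLeaves, c, mem_filter, mem_univ, true_and]; omega)
    (fun v hv => (mem_filter.1 hv).2)
  obtain ⟨p, hp⟩ := fuse_exists_walk_from_center hm hmn r
  obtain ⟨C', hC₁C', hr⟩ := exists_reflTransGen_pebStep_of_walk p (C := C₁)
    ((Nat.pow_le_pow_right two_pos hp).trans (hC.trans (le_of_add_le_right hc₁)))
  exact ⟨C', hCC₁.trans hC₁C', hr⟩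

end Fuse

theorem Nat.succ_mul_multichoose_succ (n k : ℕ) :
    (k + 1) * n.multichoose (k + 1) = (n + k) * n.multichoose k := by
  cases n with
  | zero => cases k <;> simp
  | succ n =>
    rw [Nat.multichoose_eq, Nat.multichoose_eq, show n + 1 + (k + 1) - 1 = n + k + 1 by omega,
      show n + 1 + k - 1 = n + k by omega, mul_comm, ← Nat.add_one_mul_choose_eq]
    ring

theorem Nat.multichoose_pos {n : ℕ} (hn : 0 < n) (k : ℕ) : 0 < n.multichoose k := by
  rw [Nat.multichoose_eq]
  exact Nat.choose_pos (by omega)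

theorem Nat.multichoose_add_two (n k : ℕ) :
    (k + 1) * (k + 2) * n.multichoose (k + 2) = (n + k) * (n + k + 1) * n.multichoose k := by
  have h₁ := Nat.succ_mul_multichoose_succ n k
  have h₂ := Nat.succ_mul_multichoose_succ n (k + 1)
  calc (k + 1) * (k + 2) * n.multichoose (k + 2)
      = (k + 1) * ((k + 1 + 1) * n.multichoose (k + 1 + 1)) := by ring
    _ = (n + k + 1) * ((k + 1) * n.multichoose (k + 1)) := by rw [h₂]; ring
    _ = (n + k) * (n + k + 1) * n.multichoose k := by rw [h₁]; ring

theorem Nat.cast_multichoose_add_two (n k : ℕ) :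
    ((k : ℝ) + 1) * (k + 2) * n.multichoose (k + 2) =
      (n + k) * (n + k + 1) * n.multichoose k := by
  exact_mod_cast Nat.multichoose_add_two n k

theorem Nat.multichoose_add_four_div_le {n k : ℕ} (hk : k + 4 ≤ n) :
    (n.multichoose (k + 4) : ℝ) / n.multichoose (k + 2) ≤ 8 * n ^ 2 / (k + 4) ^ 2 := by
  have h := Nat.cast_multichoose_add_two n (k + 2)
  push_cast at h
  have hM : (0 : ℝ) < n.multichoose (k + 2) := by exact_mod_cast Nat.multichoose_pos (by omega) _
  have hnk : (k : ℝ) + 4 ≤ n := by exact_mod_cast hk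
  have h₁ : ((n : ℝ) + k + 2) * (n + k + 3) ≤ 4 * n ^ 2 := by nlinarith
  have h₂ : ((k : ℝ) + 4) ^ 2 ≤ 2 * ((k + 3) * (k + 4)) := by nlinarith
  rw [div_le_div_iff₀ hM (by positivity)]
  nlinarith [mul_le_mul_of_nonneg_left h₂ (Nat.cast_nonneg (n.multichoose (k + 4))),
    mul_le_mul_of_nonneg_right h₁ hM.le]

theorem Nat.multichoose_add_four_mul_div_sq_le {n k : ℕ} (hk : k + 4 ≤ n) :
    (n.multichoose (k + 4) * n.multichoose k : ℝ) / n.multichoose (k + 2) ^ 2 ≤ 1 + 10 / n := by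
  have h₄ := Nat.cast_multichoose_add_two n (k + 2)
  have h₂ := Nat.cast_multichoose_add_two n k
  push_cast at h₄
  have hM : (0 : ℝ) < n.multichoose (k + 2) := by exact_mod_cast Nat.multichoose_pos (by omega) _
  have hn : (0 : ℝ) < n := by exact_mod_cast (by omega : 0 < n)
  have hnk : (k : ℝ) + 4 ≤ n := by exact_mod_cast hk
  have hX : ((n : ℝ) + k + 2) * (n + k + 3) ≤ (1 + 10 / n) * ((n + k) * (n + k + 1)) := by
    rw [one_add_div hn.ne', div_mul_eq_mul_div, le_div_iff₀ hn]
    nlinarith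
  have hA : ((k : ℝ) + 1) * (k + 2) ≤ (k + 3) * (k + 4) := by nlinarith
  rw [div_le_iff₀ (by positivity)]
  refine le_of_mul_le_mul_right ?_
    (by positivity : (0 : ℝ) < (k + 3) * (k + 4) * ((n + k) * (n + k + 1)))
  calc (n.multichoose (k + 4) * n.multichoose k : ℝ) *
        ((k + 3) * (k + 4) * ((n + k) * (n + k + 1)))
      = ((n : ℝ) + k + 2) * (n + k + 3) * ((k + 1) * (k + 2)) * n.multichoose (k + 2) ^ 2 := by
        linear_combination ((n : ℝ) + k) * (n + k + 1) * n.multichoose k * h₄ -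
          ((n : ℝ) + k + 2) * (n + k + 3) * n.multichoose (k + 2) * h₂
    _ ≤ (1 + 10 / n) * ((n + k) * (n + k + 1)) * ((k + 3) * (k + 4)) *
          n.multichoose (k + 2) ^ 2 :=
        mul_le_mul_of_nonneg_right (mul_le_mul hX hA (by positivity) (by positivity))
          (by positivity)
    _ = _ := by ring

theorem card_filter_lt_div_card_le {β : Type*} [Fintype β] (f : β → ℝ) {c : ℝ}
    (hS : 0 < ∑ b, f b) (hc : 2 * c * Fintype.card β ≤ ∑ b, f b) :
    (#{b | f b < c} : ℝ) / Fintype.card β ≤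
      4 * (Fintype.card β * (∑ b, f b ^ 2) / (∑ b, f b) ^ 2 - 1) := by
  set N : ℝ := (Fintype.card β : ℝ)
  set S₁ := ∑ b, f b
  set S₂ := ∑ b, f b ^ 2
  obtain ⟨b₀, -, -⟩ := exists_ne_zero_of_sum_ne_zero hS.ne'
  have hN : 0 < N := Nat.cast_pos.2 (Fintype.card_pos_iff.2 ⟨b₀⟩)
  obtain ⟨μ, hμ⟩ : ∃ μ, N * μ = S₁ := ⟨S₁ / N, mul_div_cancel₀ _ hN.ne'⟩
  have hμpos : 0 < μ := pos_of_mul_pos_right (hμ ▸ hS) hN.le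
  have hcμ : c ≤ μ / 2 := by nlinarith
  have hbad : (#{b | f b < c} : ℝ) * (μ / 2) ^ 2 ≤ ∑ b, (f b - μ) ^ 2 :=
    calc (#{b | f b < c} : ℝ) * (μ / 2) ^ 2 = ∑ b ∈ {b | f b < c}, (μ / 2) ^ 2 := by
          rw [sum_const, nsmul_eq_mul]
      _ ≤ ∑ b ∈ {b | f b < c}, (f b - μ) ^ 2 := sum_le_sum fun b hb => by
          have hfb : μ / 2 ≤ μ - f b := by linarith [(mem_filter.1 hb).2]
          calc (μ / 2) ^ 2 ≤ (μ - f b) ^ 2 := pow_le_pow_left₀ (by positivity) hfb 2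
            _ = (f b - μ) ^ 2 := by ring
      _ ≤ ∑ b, (f b - μ) ^ 2 :=
          sum_le_sum_of_subset_of_nonneg (filter_subset _ _) fun _ _ _ => sq_nonneg _
  have hvar : ∑ b, (f b - μ) ^ 2 = S₂ - 2 * μ * S₁ + N * μ ^ 2 := by
    simp only [sub_sq, sum_add_distrib, sum_sub_distrib, ← sum_mul, ← mul_sum, sum_const,
      card_univ, nsmul_eq_mul]
    ring
  have key : (#{b | f b < c} : ℝ) * S₁ ^ 2 ≤ 4 * N * (N * S₂ - S₁ ^ 2) := by
    have := mul_le_mul_of_nonneg_right (hbad.trans_eq hvar) (by positivity : (0:ℝ) ≤ 4 * N ^ 2)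
    rw [← hμ] at this ⊢
    linear_combination this
  rw [div_le_iff₀ hN,
    show 4 * (N * S₂ / S₁ ^ 2 - 1) * N = 4 * N * (N * S₂ - S₁ ^ 2) / S₁ ^ 2 by field_simp,
    le_div_iff₀ (by positivity)]
  exact key

theorem Multiset.two_le_count_and_two_le_count_iff {α : Type*} [DecidableEq α] {v w : α}
    (hvw : v ≠ w) {C : Multiset α} :
    2 ≤ C.count v ∧ 2 ≤ C.count w ↔ replicate 2 v + replicate 2 w ≤ C := by
  simp only [Multiset.le_iff_count, Multiset.count_add, Multiset.count_replicate]
  constructor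
  · rintro ⟨hv, hw⟩ a
    split_ifs <;> grind
  · intro h
    have := h v
    have := h w
    grind

section Counting

variable {α : Type*} [Fintype α] [DecidableEq α]

theorem card_filter_sym_le (s : Multiset α) {t : ℕ} (h : Multiset.card s ≤ t) :
    #{C : Sym α t | s ≤ (C : Multiset α)} =
      (Fintype.card α).multichoose (t - Multiset.card s) := by
  rw [← Fintype.card_subtype, ← Sym.card_sym_eq_multichoose]
  exact Fintype.card_congr
    { toFun := fun C => ⟨(C : Multiset α) - s, by rw [Multiset.card_sub C.2, Sym.card_coe]⟩
      invFun := fun D => ⟨⟨D + s, by rw [Multiset.card_add, Sym.card_coe]; omega⟩,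
        Multiset.le_add_left _ _⟩
      left_inv := fun C => Subtype.ext (Subtype.ext (tsub_add_cancel_of_le C.2))
      right_inv := fun D => Subtype.ext (add_tsub_cancel_right _ _) }

theorem card_filter_two_le_count {t : ℕ} (ht : 2 ≤ t) (v : α) :
    #{C : Sym α t | 2 ≤ (C : Multiset α).count v} = (Fintype.card α).multichoose (t - 2) := by
  simp_rw [Multiset.le_count_iff_replicate_le]
  rw [card_filter_sym_le _ (by simpa using ht), Multiset.card_replicate]

theorem card_filter_two_le_count_and {t : ℕ} (ht : 4 ≤ t) {v w : α} (hvw : v ≠ w) :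
    #{C : Sym α t | 2 ≤ (C : Multiset α).count v ∧ 2 ≤ (C : Multiset α).count w} =
      (Fintype.card α).multichoose (t - 4) := by
  simp_rw [Multiset.two_le_count_and_two_le_count_iff hvw]
  rw [card_filter_sym_le _ (by simpa using ht)]
  simp

theorem sum_heavyCount (P : Finset α) {t : ℕ} (ht : 2 ≤ t) :
    ∑ C : Sym α t, heavyCount P (C : Multiset α).count =
      #P * (Fintype.card α).multichoose (t - 2) := by
  simp only [heavyCount, card_filter]
  rw [sum_comm]
  simp only [← card_filter, card_filter_two_le_count ht, sum_const, smul_eq_mul]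

theorem sum_heavyCount_sq_le (P : Finset α) {t : ℕ} (ht : 4 ≤ t) :
    ∑ C : Sym α t, heavyCount P (C : Multiset α).count ^ 2 ≤
      #P * (Fintype.card α).multichoose (t - 2) +
        #P ^ 2 * (Fintype.card α).multichoose (t - 4) := by
  set M₂ := (Fintype.card α).multichoose (t - 2)
  set M₄ := (Fintype.card α).multichoose (t - 4)
  have hpair (v w : α) :
      #{C : Sym α t | 2 ≤ (C : Multiset α).count v ∧ 2 ≤ (C : Multiset α).count w} ≤
        (if v = w then M₂ else 0) + M₄ := by
    split_ifs with h
    · subst h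
      simp only [and_self, card_filter_two_le_count (by omega : 2 ≤ t)]
      omega
    · rw [card_filter_two_le_count_and ht h, zero_add]
  calc ∑ C : Sym α t, heavyCount P (C : Multiset α).count ^ 2
      = ∑ v ∈ P, ∑ w ∈ P,
          #{C : Sym α t | 2 ≤ (C : Multiset α).count v ∧
            2 ≤ (C : Multiset α).count w} := by
        simp only [heavyCount, card_filter, sq, sum_mul_sum, ite_zero_mul_ite_zero, mul_one]
        rw [sum_comm]
        refine sum_congr rfl fun v _ => ?_
        rw [sum_comm]
    _ ≤ ∑ v ∈ P, ∑ w ∈ P, ((if v = w then M₂ else 0) + M₄) :=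
        sum_le_sum fun v _ => sum_le_sum fun w _ => hpair v w
    _ = #P * M₂ + #P ^ 2 * M₄ := by
        simp only [sum_add_distrib, sum_ite_eq, sum_const, smul_eq_mul, sum_ite_mem, inter_self]
        ring

theorem card_filter_heavyCount_lt_div_le (P : Finset α) {t c : ℕ} (ht : 4 ≤ t)
    (htn : t ≤ Fintype.card α) (hP : Fintype.card α ≤ 2 * #P)
    (hc : (c : ℝ) ≤ t ^ 2 / (32 * Fintype.card α)) :
    (#{C : Sym α t | heavyCount P (C : Multiset α).count < c} : ℝ) / Fintype.card (Sym α t) ≤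
      64 * Fintype.card α / t ^ 2 + 40 / Fintype.card α := by
  obtain ⟨k, rfl⟩ : ∃ k, t = k + 4 := ⟨t - 4, by omega⟩
  have hS₁ : ∑ C : Sym α (k + 4), (heavyCount P (C : Multiset α).count : ℝ) =
      #P * (Fintype.card α).multichoose (k + 2) := by
    exact_mod_cast sum_heavyCount P (t := k + 4) (by omega)
  have hS₂ : ∑ C : Sym α (k + 4), (heavyCount P (C : Multiset α).count : ℝ) ^ 2 ≤
      #P * (Fintype.card α).multichoose (k + 2) + #P ^ 2 * (Fintype.card α).multichoose k := by
    exact_mod_cast sum_heavyCount_sq_le P (t := k + 4) (by omega)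
  have hM₂ : (0 : ℝ) < (Fintype.card α).multichoose (k + 2) := by
    exact_mod_cast Nat.multichoose_pos (by omega) _
  rw [Sym.card_sym_eq_multichoose]
  have hDM₂ := Nat.multichoose_add_four_div_le htn
  have hDM₄ := Nat.multichoose_add_four_mul_div_sq_le htn
  set n := Fintype.card α
  set D : ℝ := (n.multichoose (k + 4) : ℝ)
  set M₂ : ℝ := (n.multichoose (k + 2) : ℝ)
  set M₄ : ℝ := (n.multichoose k : ℝ)
  have hn : (0 : ℝ) < n := by exact_mod_cast (by omega : 0 < n)
  have hq : (n : ℝ) ≤ 2 * #P := by exact_mod_cast hP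
  have hcD : 2 * c * D ≤ #P * M₂ := by
    rw [← div_le_iff₀ hM₂, mul_div_assoc]
    calc 2 * c * (D / M₂) ≤ 2 * ((k + 4) ^ 2 / (32 * n)) * (8 * n ^ 2 / (k + 4) ^ 2) := by
          gcongr
          exact_mod_cast hc
      _ = n / 2 := by field_simp; ring
      _ ≤ #P := by linarith
  have hbad := card_filter_lt_div_card_le
    (fun C : Sym α (k + 4) => (heavyCount P (C : Multiset α).count : ℝ)) (c := c)
    (by rw [hS₁]; nlinarith) (by rw [hS₁, Sym.card_sym_eq_multichoose]; exact hcD)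
  simp only [Nat.cast_lt, Sym.card_sym_eq_multichoose, hS₁] at hbad
  refine hbad.trans ?_
  push_cast
  calc 4 * (D * (∑ C : Sym α (k + 4), (heavyCount P (C : Multiset α).count : ℝ) ^ 2) /
          (#P * M₂) ^ 2 - 1)
      ≤ 4 * (D * (#P * M₂ + #P ^ 2 * M₄) / (#P * M₂) ^ 2 - 1) := by gcongr
    _ = 4 * (D / M₂ / #P + D * M₄ / M₂ ^ 2 - 1) := by
        have : (0 : ℝ) < #P := by linarith
        field_simp
    _ ≤ 4 * (8 * n ^ 2 / (k + 4) ^ 2 / (n / 2) + (1 + 10 / n) - 1) := by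
        gcongr
        linarith
    _ = 64 * n / (k + 4) ^ 2 + 40 / n := by field_simp; ring

end Counting

theorem one_sub_le_card_solvable_div {n t m : ℕ} (hm : 1 ≤ m) (ht : 4 ≤ t) (htn : t ≤ n)
    (hmn : 2 * m ≤ n) (hc : (2 ^ m : ℝ) ≤ t ^ 2 / (32 * n)) :
    1 - (64 * n / t ^ 2 + 40 / n) ≤
      (Nat.card {C : Sym (Fin n) t // Solvable (fuse n m) (C : Multiset (Fin n)).count} : ℝ) /
        (n + t - 1).choose t := by
  classical
  have hbad := card_filter_heavyCount_lt_div_le (fuseLeaves n m) (c := 2 ^ m) ht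
    (by rwa [Fintype.card_fin]) (by rw [card_fuseLeaves, Fintype.card_fin]; omega)
    (by simpa using hc)
  simp only [Fintype.card_fin, Sym.card_sym_eq_choose] at hbad
  have hgood :
      #{C : Sym (Fin n) t | ¬heavyCount (fuseLeaves n m) (C : Multiset (Fin n)).count < 2 ^ m} ≤
        Nat.card {C : Sym (Fin n) t // Solvable (fuse n m) (C : Multiset (Fin n)).count} := by
    rw [Nat.card_eq_fintype_card, Fintype.card_subtype]
    exact card_le_card fun C hC => mem_filter.2 ⟨mem_univ C,
      fuse_solvable_of_two_pow_le_heavyCount hm (by omega) (not_lt.1 (mem_filter.1 hC).2)⟩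
  have hsplit := card_filter_add_card_filter_not (s := (univ : Finset (Sym (Fin n) t)))
    (fun C => heavyCount (fuseLeaves n m) (C : Multiset (Fin n)).count < 2 ^ m)
  rw [card_univ, Sym.card_sym_eq_choose, Fintype.card_fin] at hsplit
  have hD : (0 : ℝ) < (n + t - 1).choose t := by exact_mod_cast Nat.choose_pos (by omega)
  rw [le_div_iff₀ hD]
  rw [div_le_iff₀ hD] at hbad
  have hcover : (n + t - 1).choose t ≤
      #{C : Sym (Fin n) t | heavyCount (fuseLeaves n m) (C : Multiset (Fin n)).count < 2 ^ m} +
        Nat.card {C : Sym (Fin n) t // Solvable (fuse n m) (C : Multiset (Fin n)).count} := by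
    omega
  have := (Nat.cast_le (α := ℝ)).2 hcover
  push_cast at this
  linarith

theorem two_pow_ceil_mul_logb_le {x y : ℝ} (hx : 0 ≤ x) (hy : 1 ≤ y) :
    (2 : ℝ) ^ ⌈x * Real.logb 2 y⌉₊ ≤ 2 * y ^ x := by
  have hlog : 0 ≤ x * Real.logb 2 y := mul_nonneg hx (Real.logb_nonneg one_lt_two hy)
  calc (2 : ℝ) ^ ⌈x * Real.logb 2 y⌉₊ = 2 ^ (⌈x * Real.logb 2 y⌉₊ : ℝ) :=
        (Real.rpow_natCast _ _).symm
    _ ≤ 2 ^ (x * Real.logb 2 y + 1) :=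
        Real.rpow_le_rpow_of_exponent_le one_le_two (Nat.ceil_lt_add_one hlog).le
    _ = 2 * y ^ x := by
        rw [Real.rpow_add_one two_ne_zero, mul_comm x, Real.rpow_mul zero_le_two,
          Real.rpow_logb two_pos (by norm_num) (by linarith), mul_comm]

theorem sq_eq_of_eq_mul_rpow {n t ω ε : ℝ} (hn : 0 < n) (ht : t = ω * n ^ (1 - ε)) :
    t ^ 2 = ω ^ 2 * n ^ (1 - 2 * ε) * n := by
  have h : (n ^ (1 - ε)) ^ 2 = n ^ (1 - 2 * ε) * n := by
    rw [sq, ← Real.rpow_add hn, ← Real.rpow_add_one hn.ne']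
    ring_nf
  rw [ht, mul_pow, h, mul_assoc]

theorem one_sub_le_card_solvable_div_of_rpow {n t m : ℕ} {ε ω : ℝ} (hε : ε < 1 / 2)
    (hω : 8 ≤ ω) (hn : 2 ≤ n) (htn : t ≤ n) (ht : (t : ℝ) = ω * n ^ (1 - ε))
    (hm : m = ⌈(1 - 2 * ε) * Real.logb 2 n⌉₊) :
    1 - (64 / ω ^ 2 + 40 / n) ≤
      (Nat.card {C : Sym (Fin n) t // Solvable (fuse n m) (C : Multiset (Fin n)).count} : ℝ) /
        (n + t - 1).choose t := by
  have hnR : (2 : ℝ) ≤ n := by exact_mod_cast hn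
  have htnR : (t : ℝ) ≤ n := by exact_mod_cast htn
  have hT := sq_eq_of_eq_mul_rpow (by linarith) ht
  have hA : 1 ≤ (n : ℝ) ^ (1 - 2 * ε) := Real.one_le_rpow (by linarith) (by linarith)
  have h2m : (2 : ℝ) ^ m ≤ 2 * n ^ (1 - 2 * ε) :=
    hm ▸ two_pow_ceil_mul_logb_le (by linarith) (by linarith)
  have hm1 : 1 ≤ m := hm ▸ Nat.ceil_pos.2
    (mul_pos (by linarith) (Real.logb_pos one_lt_two (by linarith)))
  have hω2 : 64 ≤ ω ^ 2 := by nlinarith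
  have hc' : (2 : ℝ) ^ m * (32 * n) ≤ t ^ 2 :=
    calc (2 : ℝ) ^ m * (32 * n) ≤ 2 * n ^ (1 - 2 * ε) * (32 * n) := by gcongr
      _ = 64 * n ^ (1 - 2 * ε) * n := by ring
      _ ≤ t ^ 2 := by rw [hT]; gcongr
  have hc : (2 : ℝ) ^ m ≤ t ^ 2 / (32 * n) := by rwa [le_div_iff₀ (by linarith)]
  have ht4 : 4 ≤ t := by
    have h16 : (16 : ℝ) ≤ t ^ 2 := by
      have : (1 : ℝ) ≤ 2 ^ m := one_le_pow₀ one_le_two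
      nlinarith
    have : (4 : ℝ) ≤ t := by nlinarith [(Nat.cast_nonneg t : (0 : ℝ) ≤ t)]
    exact_mod_cast this
  have hmn : 2 * m ≤ n := by
    have h32 : ((32 * 2 ^ m : ℕ) : ℝ) ≤ n := by
      push_cast
      nlinarith
    have := Nat.lt_two_pow_self (n := m)
    have := Nat.cast_le.1 h32
    omega
  refine le_trans ?_ (one_sub_le_card_solvable_div hm1 ht4 htn hmn hc)
  have : 64 * (n : ℝ) / t ^ 2 ≤ 64 / ω ^ 2 := by
    rw [div_le_div_iff₀ (by positivity) (by positivity), hT]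
    nlinarith
  linarith

/-- Let `ε = ε(n)` with `0 ≤ ε < 1/2`, let `ω(n) → ∞`, and set
`t = ω(n)·n^{1−ε}` with `t = o(n)` and `m = ⌈(1−2ε)·log₂ n⌉`.  Then the probability that a
uniformly random configuration of `t` pebbles on `F_{m,n}` is solvable tends to `1`. -/
theorem stmt15 (ε : ℕ → ℝ) (hε : ∀ n, 0 ≤ ε n ∧ ε n < 1 / 2)
    (ω : ℕ → ℝ) (hω : Tendsto ω atTop atTop)
    (t : ℕ → ℕ) (ht : ∀ n, (t n : ℝ) = ω n * (n : ℝ) ^ (1 - ε n))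
    (hto : (fun n => (t n : ℝ)) =o[atTop] (fun n => (n : ℝ)))
    (m : ℕ → ℕ) (hm : ∀ n, m n = ⌈(1 - 2 * ε n) * Real.logb 2 n⌉₊) :
    Tendsto (fun n =>
      (Nat.card {C : Sym (Fin n) (t n) // ∀ r : Fin n,
          ∃ C', Relation.ReflTransGen (PebStep (fuse n (m n)))
            (fun v => Multiset.count v (C : Multiset (Fin n))) C' ∧ 1 ≤ C' r} : ℝ)
        / ((n + t n - 1).choose (t n) : ℝ)) atTop (nhds 1) := by
  have hlower : Tendsto (fun n : ℕ => 1 - (64 / ω n ^ 2 + 40 / n)) atTop (nhds 1) := by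
    have h₁ := (tendsto_const_nhds (x := (64 : ℝ))).div_atTop
      ((tendsto_pow_atTop two_ne_zero).comp hω)
    simpa using tendsto_const_nhds.sub (h₁.add (tendsto_const_div_atTop_nhds_zero_nat (40 : ℝ)))
  have htn : ∀ᶠ n in atTop, t n ≤ n := by
    filter_upwards [hto.bound one_pos] with n hn
    simpa using hn
  refine tendsto_of_tendsto_of_tendsto_of_le_of_le' hlower tendsto_const_nhds ?_ ?_
  · filter_upwards [hω.eventually_ge_atTop 8, eventually_ge_atTop 2, htn] with n hωn hn htn
    exact one_sub_le_card_solvable_div_of_rpow (hε n).2 hωn hn htn (ht n) (hm n)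
  · refine Eventually.of_forall fun n => div_le_one_of_le₀ ?_ (Nat.cast_nonneg _)
    exact_mod_cast (Finite.card_subtype_le _).trans_eq
      (by rw [Nat.card_eq_fintype_card, Sym.card_sym_eq_choose, Fintype.card_fin])
end

section
/- Let ε = ε(n) with 0 ≤ ε < 1/2 and ω(n) → ∞, and set t = n^{1−ε}/ω(n) and m = ⌈(1−2ε)·log₂ n⌉. Then the probability that a uniformly random configuration of t pebbles on F_{m,n} is solvable (indeed, even v_1-solvable) tends to 0 as n → ∞. -/
open Filter

/-! Give a pebble on the path vertex `v_{i+1}` weight `2^(m-1-i)` and a pile of `k` pebbles on a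
pendant vertex weight `⌊k/2⌋`. No pebbling move increases the total weight, and a configuration
with a pebble on `v_1` has weight at least `2^(m-1)`, so by Markov's inequality the probability of
`v_1`-solvability is at most the expected weight divided by `2^(m-1)`. On average a vertex carries
`t/n` pebbles, and a pendant vertex satisfies `E⌊k/2⌋ ≤ E k - P(k ≥ 1) ≤ t²/n²`; hence the
probability is at most `2t/n + 2t²/(n 2^m)`, which is at most `2/ω + 2/ω²` for the given `t`
and `m`. -/

lemma Fintype.sum_le_sum_of_le_on_pair {ι M : Type*} [Fintype ι] [DecidableEq ι]
    [AddCommMonoid M] [PartialOrder M] [IsOrderedAddMonoid M] {f g : ι → M} {u v : ι}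
    (huv : u ≠ v) (hfg : ∀ w, w ≠ u → w ≠ v → f w = g w) (h : f u + f v ≤ g u + g v) :
    ∑ w, f w ≤ ∑ w, g w := by
  rw [← Finset.sum_compl_add_sum {u, v} f, ← Finset.sum_compl_add_sum {u, v} g,
    Finset.sum_pair huv, Finset.sum_pair huv,
    Finset.sum_congr rfl fun w hw => hfg w (by simp_all) (by simp_all)]
  exact add_le_add le_rfl h

namespace Sym

variable {α : Type*} [Fintype α] [DecidableEq α] {t : ℕ}

lemma sum_count_eq_sum_count (v w : α) :
    ∑ C : Sym α t, Multiset.count v (C : Multiset α) =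
      ∑ C : Sym α t, Multiset.count w (C : Multiset α) :=
  Fintype.sum_equiv (equivCongr (Equiv.swap v w)) _ _ fun C => by
    simpa using
      (Multiset.count_map_eq_count' (Equiv.swap v w) (C : Multiset α) (Equiv.injective _) v).symm

lemma card_mul_sum_count (v : α) :
    Fintype.card α * ∑ C : Sym α t, Multiset.count v (C : Multiset α) =
      t * Fintype.card (Sym α t) := by
  calc Fintype.card α * ∑ C : Sym α t, Multiset.count v (C : Multiset α)
      = ∑ w : α, ∑ C : Sym α t, Multiset.count w (C : Multiset α) := by
        rw [Finset.sum_congr rfl fun w _ => sum_count_eq_sum_count w v]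
        simp
    _ = ∑ _C : Sym α t, t := by
        rw [Finset.sum_comm]
        refine Finset.sum_congr rfl fun C _ => ?_
        rw [Multiset.sum_count_eq_card fun a _ => Finset.mem_univ a, card_coe]
    _ = t * Fintype.card (Sym α t) := by simp [mul_comm]

def memEquiv (a : α) : {C : Sym α (t + 1) // a ∈ C} ≃ Sym α t where
  toFun C := C.1.erase a C.2
  invFun s := ⟨a ::ₛ s, mem_cons_self a s⟩
  left_inv C := Subtype.ext (cons_erase C.2)
  right_inv s := erase_cons_head s a

lemma card_add_mul_card_mem (v : α) :
    (Fintype.card α + t - 1) * Fintype.card {C : Sym α t // v ∈ C} =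
      t * Fintype.card (Sym α t) := by
  rcases t with _ | t
  · simp [eq_nil_of_card_zero]
  rw [Fintype.card_congr (memEquiv v), card_sym_eq_choose, card_sym_eq_choose]
  rcases Fintype.card α with _ | k
  · rcases t with _ | t <;> simp
  rw [show k + 1 + (t + 1) - 1 = k + t + 1 by omega, show k + 1 + t - 1 = k + t by omega,
    Nat.add_one_mul_choose_eq, mul_comm]

lemma sum_count_div_two_add_card_mem_le (v : α) :
    ∑ C : Sym α t, Multiset.count v (C : Multiset α) / 2 + Fintype.card {C : Sym α t // v ∈ C} ≤
      ∑ C : Sym α t, Multiset.count v (C : Multiset α) := by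
  rw [Fintype.card_subtype, Finset.card_filter, ← Finset.sum_add_distrib]
  refine Finset.sum_le_sum fun C _ => ?_
  have : v ∈ C ↔ 0 < Multiset.count v (C : Multiset α) := by simp [Multiset.count_pos]
  split_ifs with h <;> rw [this] at h <;> omega

lemma sum_count_eq_div_mul [Nonempty α] (v : α) :
    (∑ C : Sym α t, Multiset.count v (C : Multiset α) : ℝ) =
      t / Fintype.card α * Fintype.card (Sym α t) := by
  have hn : (0 : ℝ) < Fintype.card α := by exact_mod_cast Fintype.card_pos
  rw [div_mul_eq_mul_div, eq_div_iff hn.ne', mul_comm]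
  exact_mod_cast card_mul_sum_count v

lemma sum_count_div_two_le [Nonempty α] (v : α) :
    (∑ C : Sym α t, (Multiset.count v (C : Multiset α) / 2 : ℕ) : ℝ) ≤
      t ^ 2 / Fintype.card α ^ 2 * Fintype.card (Sym α t) := by
  set n : ℝ := (Fintype.card α : ℝ)
  set N : ℝ := (Fintype.card (Sym α t) : ℝ)
  rcases Nat.eq_zero_or_pos t with rfl | ht
  · simp [eq_nil_of_card_zero]
  have hD : (∑ C : Sym α t, (Multiset.count v (C : Multiset α) / 2 : ℕ) : ℝ) +
      Fintype.card {C : Sym α t // v ∈ C} ≤ t / n * N := by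
    rw [← sum_count_eq_div_mul]
    exact_mod_cast sum_count_div_two_add_card_mem_le v
  have hn : 1 ≤ n := Nat.one_le_cast.2 Fintype.card_pos
  have ht : (1 : ℝ) ≤ t := by exact_mod_cast ht
  have hnt : 0 < n + t - 1 := by linarith
  have hA : (Fintype.card {C : Sym α t // v ∈ C} : ℝ) = t * N / (n + t - 1) := by
    have h := congrArg (Nat.cast : ℕ → ℝ) (card_add_mul_card_mem (t := t) v)
    rw [Nat.cast_mul, Nat.cast_sub (by omega), Nat.cast_add, Nat.cast_one, Nat.cast_mul] at h
    rw [eq_div_iff hnt.ne', ← h, mul_comm]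
  calc _ ≤ t / n * N - t * N / (n + t - 1) := by linarith
    _ = t * (t - 1) / (n * (n + t - 1)) * N := by field_simp; ring
    _ ≤ t ^ 2 / n ^ 2 * N := by
      gcongr ?_ * N
      rw [div_le_div_iff₀ (by positivity) (by positivity)]
      have : 0 ≤ t * n * (t * (t - 1) + n) := by
        have : (0 : ℝ) ≤ t * (t - 1) := by nlinarith
        positivity
      nlinarith

end Sym

section FusePotential

variable {n m : ℕ}

def fuseWeight (m : ℕ) (v : Fin n) (k : ℕ) : ℕ :=
  if v.val < m then k * 2 ^ (m - 1 - v.val) else k / 2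

def fusePotential (m : ℕ) (C : Fin n → ℕ) : ℕ := ∑ v, fuseWeight m v (C v)

lemma fuseWeight_move_le (hm : 0 < m) {u v : Fin n} (huv : (fuse n m).Adj u v) (c d : ℕ) :
    fuseWeight m u c + fuseWeight m v (d + 1) ≤ fuseWeight m u (c + 2) + fuseWeight m v d := by
  rw [fuse, SimpleGraph.fromRel_adj] at huv
  unfold fuseWeight
  rcases huv.2 with (⟨h1, h2⟩ | ⟨h1, h2⟩) | (⟨h1, h2⟩ | ⟨h1, h2⟩)
  · simp only [show u.val < m by omega, show v.val < m by omega, if_true]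
    rw [show m - 1 - u.val = m - 1 - v.val + 1 by omega, pow_succ]
    nlinarith [Nat.zero_le (2 ^ (m - 1 - v.val))]
  · simp only [show u.val < m by omega, show ¬ v.val < m by omega, if_true, if_false,
      show m - 1 - u.val = 0 by omega, pow_zero, mul_one]
    omega
  · simp only [show u.val < m by omega, show v.val < m by omega, if_true]
    rw [show m - 1 - v.val = m - 1 - u.val + 1 by omega, pow_succ]
    nlinarith [Nat.zero_le (2 ^ (m - 1 - u.val))]
  · simp only [show ¬ u.val < m by omega, show v.val < m by omega, if_true, if_false,
      show m - 1 - v.val = 0 by omega, pow_zero, mul_one]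
    omega

lemma fusePotential_le_of_pebStep (hm : 0 < m) {C C' : Fin n → ℕ} (h : PebStep (fuse n m) C C') :
    fusePotential m C' ≤ fusePotential m C := by
  obtain ⟨u, v, huv, hu, rfl⟩ := h
  refine Fintype.sum_le_sum_of_le_on_pair huv.ne (fun w hwu hwv => by simp [hwu, hwv]) ?_
  obtain ⟨c, hc⟩ := Nat.exists_eq_add_of_le' hu
  simpa [huv.ne', hc] using fuseWeight_move_le hm huv c (C v)

lemma fusePotential_le_of_reflTransGen (hm : 0 < m) {C C' : Fin n → ℕ}
    (h : Relation.ReflTransGen (PebStep (fuse n m)) C C') :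
    fusePotential m C' ≤ fusePotential m C := by
  induction h with
  | refl => exact le_rfl
  | tail _ hstep ih => exact (fusePotential_le_of_pebStep hm hstep).trans ih

lemma two_pow_le_fusePotential (hm : 0 < m) {C : Fin n → ℕ} {v : Fin n} (hv : v.val = 0)
    (hC : 1 ≤ C v) : 2 ^ (m - 1) ≤ fusePotential m C :=
  calc 2 ^ (m - 1) ≤ fuseWeight m v (C v) := by
        simp only [fuseWeight, hv, if_pos hm, Nat.sub_zero]
        exact Nat.le_mul_of_pos_left _ hC
    _ ≤ fusePotential m C :=
        Finset.single_le_sum (f := fun w => fuseWeight m w (C w)) (fun _ _ => Nat.zero_le _)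
          (Finset.mem_univ v)

lemma sum_two_pow_sub_lt : ∑ v : Fin n with v.val < m, 2 ^ (m - 1 - v.val) < 2 ^ m := by
  have hinj :
      Set.InjOn (fun v : Fin n => m - 1 - v.val) ({v : Fin n | v.val < m} : Finset _) := by
    intro v hv w hw h
    simp only [Finset.coe_filter, Finset.mem_univ, true_and, Set.mem_ofPred_eq] at hv hw h
    exact Fin.ext (by omega)
  rw [← Finset.sum_image (f := (2 ^ ·)) hinj]
  exact Nat.geomSum_lt le_rfl (by simp; omega)

lemma sum_fusePotential_le (hn : 0 < n) (t : ℕ) :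
    (∑ C : Sym (Fin n) t, fusePotential m (fun v => Multiset.count v (C : Multiset (Fin n))) : ℝ)
      ≤ (2 ^ m * t / n + t ^ 2 / n) * Fintype.card (Sym (Fin n) t) := by
  have : Nonempty (Fin n) := ⟨⟨0, hn⟩⟩
  set N : ℝ := (Fintype.card (Sym (Fin n) t) : ℝ)
  have hweight (v : Fin n) :
      (∑ C : Sym (Fin n) t, fuseWeight m v (Multiset.count v (C : Multiset (Fin n))) : ℝ) ≤
        if v.val < m then 2 ^ (m - 1 - v.val) * (t / n * N) else t ^ 2 / n ^ 2 * N := by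
    unfold fuseWeight
    split_ifs
    · push_cast
      rw [← Finset.sum_mul, Sym.sum_count_eq_div_mul v, Fintype.card_fin, mul_comm]
    · simpa using Sym.sum_count_div_two_le v
  calc (∑ C : Sym (Fin n) t, fusePotential m (fun v => Multiset.count v (C : Multiset (Fin n))) : ℝ)
      = ∑ v : Fin n, (∑ C : Sym (Fin n) t,
          fuseWeight m v (Multiset.count v (C : Multiset (Fin n))) : ℝ) := by
        unfold fusePotential
        push_cast
        exact Finset.sum_comm
    _ ≤ ∑ v : Fin n, if v.val < m then 2 ^ (m - 1 - v.val) * (t / n * N)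
          else t ^ 2 / n ^ 2 * N := Finset.sum_le_sum fun v _ => hweight v
    _ = (∑ v : Fin n with v.val < m, (2 : ℝ) ^ (m - 1 - v.val)) * (t / n * N) +
          ({v : Fin n | ¬ v.val < m} : Finset _).card * (t ^ 2 / n ^ 2 * N) := by
        rw [Finset.sum_ite, Finset.sum_mul, Finset.sum_const, nsmul_eq_mul]
    _ ≤ 2 ^ m * (t / n * N) + n * (t ^ 2 / n ^ 2 * N) := by
        gcongr
        · exact_mod_cast sum_two_pow_sub_lt.le
        · exact_mod_cast (Finset.card_filter_le _ _).trans (Finset.card_fin n).le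
    _ = (2 ^ m * t / n + t ^ 2 / n) * N := by
        field_simp

lemma card_solvable_div_choose_le (hn : 0 < n) (hm : 0 < m) (t : ℕ) :
    (Nat.card {C : Sym (Fin n) t //
        ∃ C', Relation.ReflTransGen (PebStep (fuse n m))
          (fun v => Multiset.count v (C : Multiset (Fin n))) C' ∧
          ∀ v : Fin n, v.val = 0 → 1 ≤ C' v} : ℝ) / ((n + t - 1).choose t : ℝ) ≤
      2 * t / n + 2 * t ^ 2 / (n * 2 ^ m) := by
  classical
  set K := Nat.card {C : Sym (Fin n) t //
        ∃ C', Relation.ReflTransGen (PebStep (fuse n m))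
          (fun v => Multiset.count v (C : Multiset (Fin n))) C' ∧
          ∀ v : Fin n, v.val = 0 → 1 ≤ C' v}
  have hmarkov : K * 2 ^ (m - 1) ≤
      ∑ C : Sym (Fin n) t, fusePotential m (fun v => Multiset.count v (C : Multiset (Fin n))) := by
    simp only [K, Nat.card_eq_fintype_card, Fintype.card_subtype, ← smul_eq_mul]
    refine (Finset.card_nsmul_le_sum _ _ _ fun C hC => ?_).trans
      (Finset.sum_le_sum_of_subset (Finset.filter_subset _ _))
    obtain ⟨C', hreach, hroot⟩ := (Finset.mem_filter.1 hC).2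
    exact (two_pow_le_fusePotential hm (v := ⟨0, hn⟩) rfl (hroot _ rfl)).trans
      (fusePotential_le_of_reflTransGen hm hreach)
  have hN : ((n + t - 1).choose t : ℝ) = Fintype.card (Sym (Fin n) t) := by
    rw [Sym.card_sym_eq_choose, Fintype.card_fin]
  have hNpos : (0 : ℝ) < Fintype.card (Sym (Fin n) t) := by
    rw [← hN]
    exact_mod_cast Nat.choose_pos (by omega)
  have h2m : (2 : ℝ) ^ m = 2 * 2 ^ (m - 1) := by rw [← pow_succ', Nat.sub_add_cancel hm]
  rw [hN, div_le_iff₀ hNpos]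
  refine le_of_mul_le_mul_right ?_ (pow_pos two_pos (m - 1) : (0 : ℝ) < 2 ^ (m - 1))
  calc (K : ℝ) * 2 ^ (m - 1) ≤ (2 ^ m * t / n + t ^ 2 / n) * Fintype.card (Sym (Fin n) t) :=
        (by exact_mod_cast hmarkov : (K : ℝ) * 2 ^ (m - 1) ≤ _).trans (sum_fusePotential_le hn t)
    _ = _ := by
        rw [h2m]
        field_simp

end FusePotential

lemma Real.rpow_le_two_pow_ceil_logb {x : ℝ} (hx : 0 < x) (a : ℝ) :
    x ^ a ≤ 2 ^ ⌈a * Real.logb 2 x⌉₊ :=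
  calc x ^ a = (2 : ℝ) ^ (a * Real.logb 2 x) := by
        rw [mul_comm, Real.rpow_mul zero_le_two, Real.rpow_logb two_pos (by norm_num) hx]
    _ ≤ (2 : ℝ) ^ (⌈a * Real.logb 2 x⌉₊ : ℝ) :=
        Real.rpow_le_rpow_of_exponent_le one_le_two (Nat.le_ceil _)
    _ = 2 ^ ⌈a * Real.logb 2 x⌉₊ := Real.rpow_natCast 2 _

lemma two_mul_div_add_two_mul_sq_div_le {x ε ω t M : ℝ} (hx : 1 ≤ x) (hε : 0 ≤ ε) (hω : 0 < ω)
    (ht : t = x ^ (1 - ε) / ω) (hM : x ^ (1 - 2 * ε) ≤ M) :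
    2 * t / x + 2 * t ^ 2 / (x * M) ≤ 2 / ω + 2 / ω ^ 2 := by
  have hx0 : 0 < x := by linarith
  have hpos : 0 < x ^ (1 - 2 * ε) := Real.rpow_pos_of_pos hx0 _
  have ht0 : 0 ≤ t := by rw [ht]; positivity
  have hlin : t ≤ x / ω := by
    rw [ht]
    gcongr
    exact Real.rpow_le_self_of_one_le hx (by linarith)
  have hsq : t ^ 2 = x * x ^ (1 - 2 * ε) / ω ^ 2 := by
    rw [ht, div_pow, ← Real.rpow_natCast, ← Real.rpow_mul hx0.le]
    nth_rewrite 2 [← Real.rpow_one x]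
    rw [← Real.rpow_add hx0]
    norm_num
    ring_nf
  have h1 : 2 * t / x ≤ 2 / ω := by
    rw [div_le_div_iff₀ hx0 hω]
    rw [le_div_iff₀ hω] at hlin
    nlinarith
  have h2 : 2 * t ^ 2 / (x * M) ≤ 2 / ω ^ 2 := by
    have hM0 : 0 < M := hpos.trans_le hM
    calc 2 * t ^ 2 / (x * M) = 2 / ω ^ 2 * (x ^ (1 - 2 * ε) / M) := by
          rw [hsq]
          field_simp
      _ ≤ 2 / ω ^ 2 := mul_le_of_le_one_right (by positivity) ((div_le_one hM0).2 hM)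
  linarith

/-- Let `ε = ε(n)` with `0 ≤ ε < 1/2`, let `ω(n) → ∞`, and set
`t = n^{1−ε}/ω(n)` and `m = ⌈(1−2ε)·log₂ n⌉`.  Then the probability that a uniformly random
configuration of `t` pebbles on `F_{m,n}` is `v_1`-solvable (hence solvable) tends to `0`.
(`v_1` is the vertex of index `0`, encoded by the condition `v.val = 0`.) -/
theorem stmt16 (ε : ℕ → ℝ) (hε : ∀ n, 0 ≤ ε n ∧ ε n < 1 / 2)
    (ω : ℕ → ℝ) (hω : Tendsto ω atTop atTop)
    (t : ℕ → ℕ) (ht : ∀ n, (t n : ℝ) = (n : ℝ) ^ (1 - ε n) / ω n)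
    (m : ℕ → ℕ) (hm : ∀ n, m n = ⌈(1 - 2 * ε n) * Real.logb 2 n⌉₊) :
    Tendsto (fun n =>
      (Nat.card {C : Sym (Fin n) (t n) //
          ∃ C', Relation.ReflTransGen (PebStep (fuse n (m n)))
            (fun v => Multiset.count v (C : Multiset (Fin n))) C' ∧
            ∀ v : Fin n, v.val = 0 → 1 ≤ C' v} : ℝ)
        / ((n + t n - 1).choose (t n) : ℝ)) atTop (nhds 0) := by
  have hlim : Tendsto (fun n => 2 / ω n + 2 / ω n ^ 2) atTop (nhds 0) := by
    simpa using (tendsto_const_nhds.div_atTop hω).add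
      (tendsto_const_nhds.div_atTop ((tendsto_pow_atTop two_ne_zero).comp hω))
  refine squeeze_zero' (Eventually.of_forall fun n => by positivity) ?_ hlim
  filter_upwards [hω.eventually_gt_atTop 0, eventually_ge_atTop 2] with n hωn hn
  have hn2 : (2 : ℝ) ≤ n := by exact_mod_cast hn
  have hm0 : 0 < m n := by
    rw [hm n, Nat.ceil_pos]
    exact mul_pos (by linarith [(hε n).2]) (Real.logb_pos one_lt_two (by linarith))
  refine (card_solvable_div_choose_le (by omega) hm0 (t n)).trans
    (two_mul_div_add_two_mul_sq_div_le (by linarith) (hε n).1 hωn (ht n) ?_)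
  rw [hm n]
  exact Real.rpow_le_two_pow_ceil_logb (by linarith) _
end
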